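/- Poisson reduction of the canonical structure: with ♯(e_ρ, e_π) = (e_π, −e_ρ) on Ω^{n−k}(M) × Ω^k(M), Tπ_G(ρ̇, π̇) = (dρ̇, π̇), and T*π_G(ē_ρ, ē_π) = ((−1)^{n−k} d ē_ρ, ē_π), the composition Tπ_G ∘ ♯ ∘ T*π_G equals the map (ē_ρ, ē_π) ↦ (d ē_π, (−1)^{n−k−1} d ē_ρ). -/
import Mathlib

/-- Poisson reduction of the canonical structure: with `♯(e_ρ, e_π) = (e_π, -e_ρ)`,
`Tπ_G(ρ̇, π̇) = (dρ̇, π̇)` and `T*π_G(ē_ρ, ē_π) = ((-1)^{n-k} d ē_ρ, ē_π)`, the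
composition `Tπ_G ∘ ♯ ∘ T*π_G` equals `(ē_ρ, ē_π) ↦ (d ē_π, (-1)^{n-k-1} d ē_ρ)`.
Here `A = Ω^{n-k-1}` (the `ē_ρ`'s), `B = Ω^k` (the `ē_π`'s and `e_π`'s),
`C = Ω^{n-k}` (the `e_ρ`'s and `π̇`'s), `Dd = Ω^{k+1}` (the `ρ̇`'s). -/
theorem reduced_poisson_composition
    {A B C Dd : Type*}
    [AddCommGroup A] [Module ℝ A] [AddCommGroup B] [Module ℝ B]
    [AddCommGroup C] [Module ℝ C] [AddCommGroup Dd] [Module ℝ Dd]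
    (n k : ℕ) (hk : k < n)
    (dA : A →ₗ[ℝ] C)                     -- d : Ω^{n-k-1} → Ω^{n-k}
    (dB : B →ₗ[ℝ] Dd)                    -- d : Ω^k → Ω^{k+1}
    (sharp : C × B → B × C)              -- ♯(e_ρ, e_π) = (e_π, -e_ρ)
    (Tpi : B × C → Dd × C)               -- Tπ_G(ρ̇, π̇) = (dρ̇, π̇)
    (Tspi : A × B → C × B)               -- T*π_G(ē_ρ, ē_π) = ((-1)^{n-k} dē_ρ, ē_π)
    (hsharp : ∀ p : C × B, sharp p = (p.2, -p.1))
    (hTpi : ∀ p : B × C, Tpi p = (dB p.1, p.2))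
    (hTspi : ∀ p : A × B, Tspi p = (((-1 : ℝ) ^ (n - k)) • dA p.1, p.2)) :
    ∀ p : A × B,
      Tpi (sharp (Tspi p)) = (dB p.2, ((-1 : ℝ) ^ (n - k - 1)) • dA p.1) := by
  intro p
  rw [hTspi, hsharp, hTpi]
  obtain ⟨m, hm⟩ : ∃ m, n - k = m + 1 := ⟨n - k - 1, by omega⟩
  rw [hm, Nat.add_sub_cancel, pow_succ]
  ext <;> simp [neg_smul, mul_comm]
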